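/- Compact export for intuitionistic logic: for any finite set Re of atomic rules disjoint from the base B, Γ, Re ⊢_{IL∪B} A holds if and only if there is a finite Δ ⊆ B* such that Γ, Re*, Δ ⊢_IL A, where R* is the disjunction-free formula translating rule R. -/

import Mathlib

inductive PAtom : Type
  | bot
  | prop (n : ℕ)
deriving DecidableEq

inductive Formula : Type
  | atom (a : PAtom)
  | conj (f g : Formula)
  | disj (f g : Formula)
  | imp (f g : Formula)

/-- Atomic rules: `mk prems concl` is a rule with atomic conclusion `concl`,
whose premises are pairs (Reᵢ, Aᵢ) of a (finite) set of dischargeable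
lower-level rules Reᵢ and an atomic premise Aᵢ. A level-0 rule (an atom used
as an axiom) is `mk [] a`. -/
inductive ARule : Type
  | mk (prems : List (List ARule × PAtom)) (concl : PAtom)

mutual
  /-- The translation R* of an atomic rule into a disjunction-free formula:
  (⋀ᵢ (⋀_{ρ∈Reᵢ} ρ* → Aᵢ)) → A, with a level-0 rule translated to its atom. -/
  def ARule.star : ARule → Formula
    | ARule.mk [] a => Formula.atom a
    | ARule.mk (p :: ps) a => Formula.imp (premsConj p ps) (Formula.atom a)
  termination_by r => sizeOf r
  decreasing_by simp_wf <;> omega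
  /-- conjunction ⋀ᵢ (⋀_{ρ∈Reᵢ} ρ* → Aᵢ) over a nonempty list of premises -/
  def premsConj : (List ARule × PAtom) → List (List ARule × PAtom) → Formula
    | p, [] => premFormula p
    | p, q :: ps => Formula.conj (premFormula p) (premsConj q ps)
  termination_by p ps => 1 + sizeOf p + sizeOf ps
  decreasing_by all_goals (simp_wf <;> omega)
  /-- (⋀_{ρ∈Re} ρ* → A), which is just A when Re is empty -/
  def premFormula : (List ARule × PAtom) → Formula
    | ([], b) => Formula.atom b
    | (r :: rs, b) => Formula.imp (rulesConj r rs) (Formula.atom b)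
  termination_by p => sizeOf p
  decreasing_by simp_wf <;> omega
  /-- conjunction ⋀_{ρ∈Re} ρ* over a nonempty list of rules -/
  def rulesConj : ARule → List ARule → Formula
    | r, [] => r.star
    | r, s :: rs => Formula.conj r.star (rulesConj s rs)
  termination_by r rs => 1 + sizeOf r + sizeOf rs
  decreasing_by all_goals (simp_wf <;> omega)
end

/-- Natural deduction for intuitionistic propositional logic extended with a
set R of atomic rules (which may be discharged/assumed): `Der R Γ A` means A
is derivable from assumptions Γ using the rules of IL and the atomic rules
in R (applications of a higher-level atomic rule may discharge its
premise-rules). -/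
inductive Der : Set ARule → Set Formula → Formula → Prop
  | hyp {R Γ A} : A ∈ Γ → Der R Γ A
  | arule {R Γ} (prems : List (List ARule × PAtom)) (a : PAtom) :
      ARule.mk prems a ∈ R →
      (∀ p ∈ prems, Der (R ∪ {r | r ∈ p.1}) Γ (Formula.atom p.2)) →
      Der R Γ (Formula.atom a)
  | andI {R Γ f g} : Der R Γ f → Der R Γ g → Der R Γ (Formula.conj f g)
  | andE1 {R Γ f g} : Der R Γ (Formula.conj f g) → Der R Γ f
  | andE2 {R Γ f g} : Der R Γ (Formula.conj f g) → Der R Γ g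
  | orI1 {R Γ f g} : Der R Γ f → Der R Γ (Formula.disj f g)
  | orI2 {R Γ f g} : Der R Γ g → Der R Γ (Formula.disj f g)
  | orE {R Γ f g A} : Der R Γ (Formula.disj f g) →
      Der R (insert f Γ) A → Der R (insert g Γ) A → Der R Γ A
  | impI {R Γ f g} : Der R (insert f Γ) g → Der R Γ (Formula.imp f g)
  | impE {R Γ f g} : Der R Γ (Formula.imp f g) → Der R Γ f → Der R Γ g
  | botE {R Γ A} : Der R Γ (Formula.atom PAtom.bot) → Der R Γ A

/-!
A rule `ρ ∈ R` yields `⊢_R ρ*` by induction on `ρ`: assume the premise conjunction and derive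
each premise atom by applying its premise formula to the translations of the dischargeable rules,
which are derivable by the induction hypothesis. Hence `Γ, R* ⊢ A` implies `Γ ⊢_R A` by cut.
Conversely, an application of a rule `ρ` becomes modus ponens with the hypothesis `ρ*`, the rules
discharged at that application becoming hypotheses of `→`-introductions; so `Γ ⊢_R A` implies
`Γ, R* ⊢ A`. By compactness of `⊢`, finitely many hypotheses from `B*` then suffice.
-/

open Set

namespace Der

variable {R R' : Set ARule} {Γ Γ' : Set Formula} {A : Formula}

theorem mono (h : Der R Γ A) (hR : R ⊆ R') (hΓ : Γ ⊆ Γ') : Der R' Γ' A := by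
  induction h generalizing R' Γ' with
  | hyp hA => exact hyp (hΓ hA)
  | arule prems a hmem _ ih =>
    exact arule prems a (hR hmem) fun p hp => ih p hp (union_subset_union_left _ hR) hΓ
  | andI _ _ ih₁ ih₂ => exact andI (ih₁ hR hΓ) (ih₂ hR hΓ)
  | andE1 _ ih => exact andE1 (ih hR hΓ)
  | andE2 _ ih => exact andE2 (ih hR hΓ)
  | orI1 _ ih => exact orI1 (ih hR hΓ)
  | orI2 _ ih => exact orI2 (ih hR hΓ)
  | orE _ _ _ ih ih₁ ih₂ =>
    exact orE (ih hR hΓ) (ih₁ hR (insert_subset_insert hΓ)) (ih₂ hR (insert_subset_insert hΓ))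
  | impI _ ih => exact impI (ih hR (insert_subset_insert hΓ))
  | impE _ _ ih₁ ih₂ => exact impE (ih₁ hR hΓ) (ih₂ hR hΓ)
  | botE _ ih => exact botE (ih hR hΓ)

theorem weaken (h : Der R Γ A) (hΓ : Γ ⊆ Γ') : Der R Γ' A :=
  h.mono subset_rfl hΓ

theorem cut (h : Der R Γ' A) (hΓ' : ∀ B ∈ Γ', Der R Γ B) : Der R Γ A := by
  have lift : ∀ {R : Set ARule} {Γ Γ' : Set Formula} (f : Formula), (∀ B ∈ Γ', Der R Γ B) →
      ∀ B ∈ insert f Γ', Der R (insert f Γ) B := by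
    rintro R Γ Γ' f hΓ' B (rfl | hB)
    exacts [hyp (mem_insert _ _), (hΓ' B hB).weaken (subset_insert _ _)]
  induction h generalizing Γ with
  | hyp hA => exact hΓ' _ hA
  | arule prems a hmem _ ih =>
    exact arule prems a hmem fun p hp =>
      ih p hp fun B hB => (hΓ' B hB).mono subset_union_left subset_rfl
  | andI _ _ ih₁ ih₂ => exact andI (ih₁ hΓ') (ih₂ hΓ')
  | andE1 _ ih => exact andE1 (ih hΓ')
  | andE2 _ ih => exact andE2 (ih hΓ')
  | orI1 _ ih => exact orI1 (ih hΓ')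
  | orI2 _ ih => exact orI2 (ih hΓ')
  | orE _ _ _ ih ih₁ ih₂ => exact orE (ih hΓ') (ih₁ (lift _ hΓ')) (ih₂ (lift _ hΓ'))
  | impI _ ih => exact impI (ih (lift _ hΓ'))
  | impE _ _ ih₁ ih₂ => exact impE (ih₁ hΓ') (ih₂ hΓ')
  | botE _ ih => exact botE (ih hΓ')

theorem conj_iff {f g : Formula} : Der R Γ (.conj f g) ↔ Der R Γ f ∧ Der R Γ g :=
  ⟨fun h => ⟨h.andE1, h.andE2⟩, fun h => h.1.andI h.2⟩

theorem premsConj_iff (p : List ARule × PAtom) (ps : List (List ARule × PAtom)) :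
    Der R Γ (premsConj p ps) ↔ ∀ q ∈ p :: ps, Der R Γ (premFormula q) := by
  induction ps generalizing p with
  | nil => rw [premsConj, List.forall_mem_singleton]
  | cons q ps ih => rw [premsConj, conj_iff, ih, List.forall_mem_cons (a := p)]

theorem rulesConj_iff (r : ARule) (rs : List ARule) :
    Der R Γ (rulesConj r rs) ↔ ∀ s ∈ r :: rs, Der R Γ s.star := by
  induction rs generalizing r with
  | nil => rw [rulesConj, List.forall_mem_singleton]
  | cons s rs ih => rw [rulesConj, conj_iff, ih, List.forall_mem_cons (a := r)]

theorem premFormula_intro (q : List ARule × PAtom)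
    (h : Der R (Γ ∪ ARule.star '' {r | r ∈ q.1}) (.atom q.2)) : Der R Γ (premFormula q) := by
  obtain ⟨_ | ⟨r, rs⟩, b⟩ := q
  · simpa [premFormula] using h
  · rw [premFormula]
    refine impI (h.cut ?_)
    rintro B (hB | ⟨s, hs, rfl⟩)
    exacts [hyp (mem_insert_of_mem _ hB), (rulesConj_iff r rs).1 (hyp (mem_insert _ _)) s hs]

theorem atom_of_premFormula (q : List ARule × PAtom) (h : Der R Γ (premFormula q))
    (hq : ∀ r ∈ q.1, Der R Γ r.star) : Der R Γ (.atom q.2) := by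
  obtain ⟨_ | ⟨r, rs⟩, b⟩ := q
  · rwa [premFormula] at h
  · rw [premFormula] at h
    exact h.impE ((rulesConj_iff r rs).2 hq)

theorem atom_of_star {prems : List (List ARule × PAtom)} {a : PAtom}
    (h : Der R Γ (ARule.mk prems a).star) (hprems : ∀ p ∈ prems, Der R Γ (premFormula p)) :
    Der R Γ (.atom a) := by
  cases prems with
  | nil => rwa [ARule.star] at h
  | cons p ps =>
    rw [ARule.star] at h
    exact h.impE ((premsConj_iff p ps).2 hprems)

theorem star_of_mem : ∀ {ρ : ARule} {R : Set ARule} {Γ : Set Formula}, ρ ∈ R → Der R Γ ρ.star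
  | .mk [] a, R, Γ, hρ => by
    rw [ARule.star]
    exact arule [] a hρ (by simp)
  | .mk (p :: ps) a, R, Γ, hρ => by
    rw [ARule.star]
    refine impI (arule _ a hρ fun q hq => ?_)
    have hq' : Der R (insert (premsConj p ps) Γ) (premFormula q) :=
      (premsConj_iff p ps).1 (hyp (mem_insert _ _)) q hq
    exact (hq'.mono subset_union_left subset_rfl).atom_of_premFormula q
      fun r hr => star_of_mem (Or.inr hr)
termination_by ρ => sizeOf ρ
decreasing_by
  obtain ⟨l, b⟩ := q
  have hlq := List.sizeOf_lt_of_mem hq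
  have hrl : sizeOf r < sizeOf l := List.sizeOf_lt_of_mem hr
  simp only [Prod.mk.sizeOf_spec] at hlq
  simp only [ARule.mk.sizeOf_spec]
  omega

theorem exists_finite_subset (h : Der R Γ A) : ∃ Γ₀ ⊆ Γ, Γ₀.Finite ∧ Der R Γ₀ A := by
  induction h with
  | hyp hA => exact ⟨{_}, singleton_subset_iff.2 hA, finite_singleton _, hyp rfl⟩
  | arule prems a hmem _ ih =>
    choose! Γ₀ hΓ₀ hfin hder using ih
    exact ⟨⋃ p ∈ {p | p ∈ prems}, Γ₀ p, iUnion₂_subset hΓ₀,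
      (List.finite_toSet prems).biUnion hfin,
      arule prems a hmem fun p hp => (hder p hp).weaken (subset_biUnion_of_mem hp)⟩
  | andI _ _ ih₁ ih₂ =>
    obtain ⟨Γ₁, hΓ₁, hfin₁, hder₁⟩ := ih₁
    obtain ⟨Γ₂, hΓ₂, hfin₂, hder₂⟩ := ih₂
    exact ⟨Γ₁ ∪ Γ₂, union_subset hΓ₁ hΓ₂, hfin₁.union hfin₂,
      andI (hder₁.weaken subset_union_left) (hder₂.weaken subset_union_right)⟩
  | andE1 _ ih => exact ih.imp fun _ => .imp_right (.imp_right andE1)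
  | andE2 _ ih => exact ih.imp fun _ => .imp_right (.imp_right andE2)
  | orI1 _ ih => exact ih.imp fun _ => .imp_right (.imp_right orI1)
  | orI2 _ ih => exact ih.imp fun _ => .imp_right (.imp_right orI2)
  | @orE _ _ f g _ _ _ _ ih ih₁ ih₂ =>
    obtain ⟨Γ₀, hΓ₀, hfin, hder⟩ := ih
    obtain ⟨Γ₁, hΓ₁, hfin₁, hder₁⟩ := ih₁
    obtain ⟨Γ₂, hΓ₂, hfin₂, hder₂⟩ := ih₂
    refine ⟨Γ₀ ∪ Γ₁ \ {f} ∪ Γ₂ \ {g},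
      union_subset (union_subset hΓ₀ (sdiff_singleton_subset_iff.2 hΓ₁))
        (sdiff_singleton_subset_iff.2 hΓ₂),
      (hfin.union hfin₁.sdiff).union hfin₂.sdiff,
      orE (hder.weaken (subset_union_left.trans subset_union_left))
        (hder₁.weaken ((subset_insert_sdiff_singleton f Γ₁).trans (insert_subset_insert ?_)))
        (hder₂.weaken ((subset_insert_sdiff_singleton g Γ₂).trans (insert_subset_insert ?_)))⟩
    exacts [subset_union_right.trans subset_union_left, subset_union_right]
  | @impI _ _ f _ _ ih =>
    obtain ⟨Γ₀, hΓ₀, hfin, hder⟩ := ih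
    exact ⟨Γ₀ \ {f}, sdiff_singleton_subset_iff.2 hΓ₀, hfin.sdiff,
      impI (hder.weaken (subset_insert_sdiff_singleton f Γ₀))⟩
  | impE _ _ ih₁ ih₂ =>
    obtain ⟨Γ₁, hΓ₁, hfin₁, hder₁⟩ := ih₁
    obtain ⟨Γ₂, hΓ₂, hfin₂, hder₂⟩ := ih₂
    exact ⟨Γ₁ ∪ Γ₂, union_subset hΓ₁ hΓ₂, hfin₁.union hfin₂,
      impE (hder₁.weaken subset_union_left) (hder₂.weaken subset_union_right)⟩
  | botE _ ih => exact ih.imp fun _ => .imp_right (.imp_right botE)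

theorem union_star (h : Der R Γ A) : Der ∅ (Γ ∪ ARule.star '' R) A := by
  induction h with
  | hyp hA => exact hyp (Or.inl hA)
  | arule prems a hmem _ ih =>
    refine atom_of_star (hyp (Or.inr (mem_image_of_mem _ hmem))) fun p hp => ?_
    exact premFormula_intro p (by simpa only [image_union, union_assoc] using ih p hp)
  | andI _ _ ih₁ ih₂ => exact andI ih₁ ih₂
  | andE1 _ ih => exact andE1 ih
  | andE2 _ ih => exact andE2 ih
  | orI1 _ ih => exact orI1 ih
  | orI2 _ ih => exact orI2 ih
  | orE _ _ _ ih ih₁ ih₂ => exact orE ih (insert_union ▸ ih₁) (insert_union ▸ ih₂)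
  | impI _ ih => exact impI (insert_union ▸ ih)
  | impE _ _ ih₁ ih₂ => exact impE ih₁ ih₂
  | botE _ ih => exact botE ih

theorem of_union_star (h : Der ∅ (Γ ∪ ARule.star '' R) A) : Der R Γ A :=
  (h.mono (empty_subset R) subset_rfl).cut <| by
    rintro B (hB | ⟨ρ, hρ, rfl⟩)
    exacts [hyp hB, star_of_mem hρ]

end Der

/-- compact export for intuitionistic logic: for any finite
set Re of atomic rules disjoint from the base B, Γ, Re ⊢_{IL∪B} A iff there
is a finite Δ ⊆ B* with Γ, Re*, Δ ⊢_IL A. -/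
theorem stmt_17 (B Re : Set ARule) (hReFin : Re.Finite) (hdisj : Disjoint Re B)
    (Γ : Set Formula) (A : Formula) :
    Der (B ∪ Re) Γ A ↔
      ∃ Δ : Set Formula, Δ ⊆ ARule.star '' B ∧ Δ.Finite ∧
        Der ∅ (Γ ∪ ARule.star '' Re ∪ Δ) A := by
  constructor
  · intro h
    obtain ⟨Γ₀, hΓ₀, hfin, hder⟩ := h.union_star.exists_finite_subset
    refine ⟨Γ₀ ∩ ARule.star '' B, inter_subset_right, hfin.inter_of_left _, hder.weaken ?_⟩
    intro x hx
    rcases image_union ARule.star B Re ▸ hΓ₀ hx with hxΓ | hxB | hxRe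
    exacts [Or.inl (Or.inl hxΓ), Or.inr ⟨hx, hxB⟩, Or.inl (Or.inr hxRe)]
  · rintro ⟨Δ, hΔ, -, hder⟩
    refine Der.of_union_star (hder.weaken ?_)
    rw [image_union]
    rintro x ((hx | hx) | hx)
    exacts [Or.inl hx, Or.inr (Or.inr hx), Or.inr (Or.inl (hΔ hx))]
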